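/- Let {P^(k)}_{k≥0} and {Z^(k)}_{k≥0} be sequences of real symmetric n×n matrices with P^(0) = 0 and P^(k+1) = P^(k) + Z^(k) for all k, and suppose R(P^(k)) is invertible for every k. Define A_{(0)} = A + B_1 K_1(0) + B_2 K_2(0), C_{l,(0)} = C_l + D_{l,1} K_1(0) + D_{l,2} K_2(0) (1 ≤ l ≤ r), and recursively for k ≥ 1: A_{(k)} = A_{(k−1)} − [B_1 B_2] R(P^(k))^{-1} N_{(k−1)} and C_{l,(k)} = C_{l,(k−1)} − [D_{l,1} D_{l,2}] R(P^(k))^{-1} N_{(k−1)}, where N_{(k−1)} = [B_1^T Z^(k−1) + Σ_{l=1}^r D_{l,1}^T Z^(k−1) C_{l,(k−1)}; B_2^T Z^(k−1) + Σ_{l=1}^r D_{l,2}^T Z^(k−1) C_{l,(k−1)}] (stacked). Then for every k ≥ 0 one has A_{(k)} = A + B_1 K_1(P^(k)) + B_2 K_2(P^(k)) and C_{l,(k)} = C_l + D_{l,1} K_1(P^(k)) + D_{l,2} K_2(P^(k)) for all 1 ≤ l ≤ r. -/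

import Mathlib

/-!
Stack the two players' inputs into `B = [B₁ B₂]` and `D_l = [D_{l,1} D_{l,2}]`. Then
`S(P) = BᵀP + Σ_l D_lᵀ P C_l + S` and `R(P) = R + Σ_l D_lᵀ P D_l` are affine in `P`, and the
closed-loop matrices are `A + B K(P)` and `C_l + D_l K(P)`. From `R(P) K(P) = -S(P)` one gets
`S(P + Z) = N(P, Z) - R(P + Z) K(P)`, i.e. `K(P + Z) = K(P) - R(P + Z)⁻¹ N(P, Z)`. Multiplying
by `B` and by `D_l` gives exactly the recursions defining `A_{(k)}` and `C_{l,(k)}`, so the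
theorem follows by induction on `k`.
-/

open Matrix BigOperators

noncomputable section

/-- Mean-square stability of the tuple `(F, G_1, …, G_r)` via the Lyapunov characterization. -/
def MSStable {n r : ℕ} (F : Matrix (Fin n) (Fin n) ℝ)
    (G : Fin r → Matrix (Fin n) (Fin n) ℝ) : Prop :=
  ∃ X : Matrix (Fin n) (Fin n) ℝ, X.PosDef ∧
    (-(X * F + Fᵀ * X + ∑ l, (G l)ᵀ * X * G l)).PosDef

/-- Stochastic detectability of the system `[E_0, …, E_r; F, G_1, …, G_r]`. -/
def StochDetectable {n q r : ℕ} (E0 : Matrix (Fin q) (Fin n) ℝ)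
    (E : Fin r → Matrix (Fin q) (Fin n) ℝ)
    (F : Matrix (Fin n) (Fin n) ℝ) (G : Fin r → Matrix (Fin n) (Fin n) ℝ) : Prop :=
  ∃ Θ : Matrix (Fin n) (Fin q) ℝ, MSStable (F + Θ * E0) (fun l => G l + Θ * E l)

/-- The data of the zero-sum linear-quadratic stochastic differential game. -/
structure GameData (n m1 m2 r : ℕ) where
  A : Matrix (Fin n) (Fin n) ℝ
  C : Fin r → Matrix (Fin n) (Fin n) ℝ
  B1 : Matrix (Fin n) (Fin m1) ℝ
  B2 : Matrix (Fin n) (Fin m2) ℝ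
  D1 : Fin r → Matrix (Fin n) (Fin m1) ℝ
  D2 : Fin r → Matrix (Fin n) (Fin m2) ℝ
  Q : Matrix (Fin n) (Fin n) ℝ
  hQ : Q.IsSymm
  S1 : Matrix (Fin m1) (Fin n) ℝ
  S2 : Matrix (Fin m2) (Fin n) ℝ
  R11 : Matrix (Fin m1) (Fin m1) ℝ
  R22 : Matrix (Fin m2) (Fin m2) ℝ
  R12 : Matrix (Fin m1) (Fin m2) ℝ
  hR11 : R11.IsSymm
  hR22 : R22.IsSymm

namespace GameData

variable {n m1 m2 r : ℕ} (g : GameData n m1 m2 r)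

/-- The stacked weighting matrix `S = [S_1; S_2]`. -/
def Sw : Matrix (Fin m1 ⊕ Fin m2) (Fin n) ℝ := fromRows g.S1 g.S2

/-- The full weighting matrix `R = [[R_11, R_12],[R_21, R_22]]` with `R_21 = R_12ᵀ`. -/
def Rw : Matrix (Fin m1 ⊕ Fin m2) (Fin m1 ⊕ Fin m2) ℝ :=
  fromBlocks g.R11 g.R12 g.R12ᵀ g.R22

/-- `S_1(P) = B_1ᵀ P + Σ_l D_{l,1}ᵀ P C_l + S_1`. -/
def S1P (P : Matrix (Fin n) (Fin n) ℝ) : Matrix (Fin m1) (Fin n) ℝ :=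
  g.B1ᵀ * P + ∑ l, (g.D1 l)ᵀ * P * g.C l + g.S1

/-- `S_2(P) = B_2ᵀ P + Σ_l D_{l,2}ᵀ P C_l + S_2`. -/
def S2P (P : Matrix (Fin n) (Fin n) ℝ) : Matrix (Fin m2) (Fin n) ℝ :=
  g.B2ᵀ * P + ∑ l, (g.D2 l)ᵀ * P * g.C l + g.S2

/-- `S(P) = [S_1(P); S_2(P)]`. -/
def SP (P : Matrix (Fin n) (Fin n) ℝ) : Matrix (Fin m1 ⊕ Fin m2) (Fin n) ℝ :=
  fromRows (g.S1P P) (g.S2P P)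

/-- `R_11(P)`. -/
def R11P (P : Matrix (Fin n) (Fin n) ℝ) : Matrix (Fin m1) (Fin m1) ℝ :=
  g.R11 + ∑ l, (g.D1 l)ᵀ * P * g.D1 l

/-- `R_12(P)`. -/
def R12P (P : Matrix (Fin n) (Fin n) ℝ) : Matrix (Fin m1) (Fin m2) ℝ :=
  g.R12 + ∑ l, (g.D1 l)ᵀ * P * g.D2 l

/-- `R_21(P)`. -/
def R21P (P : Matrix (Fin n) (Fin n) ℝ) : Matrix (Fin m2) (Fin m1) ℝ :=
  g.R12ᵀ + ∑ l, (g.D2 l)ᵀ * P * g.D1 l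

/-- `R_22(P)`. -/
def R22P (P : Matrix (Fin n) (Fin n) ℝ) : Matrix (Fin m2) (Fin m2) ℝ :=
  g.R22 + ∑ l, (g.D2 l)ᵀ * P * g.D2 l

/-- `R(P)` assembled from its blocks. -/
def RP (P : Matrix (Fin n) (Fin n) ℝ) : Matrix (Fin m1 ⊕ Fin m2) (Fin m1 ⊕ Fin m2) ℝ :=
  fromBlocks (g.R11P P) (g.R12P P) (g.R21P P) (g.R22P P)

/-- `K(P) = −R(P)⁻¹ S(P)` (stacked feedback gain). -/
def KP (P : Matrix (Fin n) (Fin n) ℝ) : Matrix (Fin m1 ⊕ Fin m2) (Fin n) ℝ :=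
  -((g.RP P)⁻¹ * g.SP P)

/-- `K_1(P)`: the first block of `K(P)`. -/
def K1 (P : Matrix (Fin n) (Fin n) ℝ) : Matrix (Fin m1) (Fin n) ℝ :=
  (g.KP P).submatrix Sum.inl id

/-- `K_2(P)`: the second block of `K(P)`. -/
def K2 (P : Matrix (Fin n) (Fin n) ℝ) : Matrix (Fin m2) (Fin n) ℝ :=
  (g.KP P).submatrix Sum.inr id

/-- `G(P) = PA + AᵀP + Σ_l C_lᵀ P C_l + Q − S(P)ᵀ R(P)⁻¹ S(P)`. -/
def GP (P : Matrix (Fin n) (Fin n) ℝ) : Matrix (Fin n) (Fin n) ℝ :=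
  P * g.A + g.Aᵀ * P + ∑ l, (g.C l)ᵀ * P * g.C l + g.Q
    - (g.SP P)ᵀ * (g.RP P)⁻¹ * g.SP P

/-- `A_{K(P)} = A + B_1 K_1(P) + B_2 K_2(P)`. -/
def AK (P : Matrix (Fin n) (Fin n) ℝ) : Matrix (Fin n) (Fin n) ℝ :=
  g.A + g.B1 * g.K1 P + g.B2 * g.K2 P

/-- `C_{l,K(P)} = C_l + D_{l,1} K_1(P) + D_{l,2} K_2(P)`. -/
def CK (P : Matrix (Fin n) (Fin n) ℝ) (l : Fin r) : Matrix (Fin n) (Fin n) ℝ :=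
  g.C l + g.D1 l * g.K1 P + g.D2 l * g.K2 P

/-- `N_1(P,Z)`. -/
def N1 (P Z : Matrix (Fin n) (Fin n) ℝ) : Matrix (Fin m1) (Fin n) ℝ :=
  g.B1ᵀ * Z + ∑ l, (g.D1 l)ᵀ * Z * g.CK P l

/-- `N_2(P,Z)`. -/
def N2 (P Z : Matrix (Fin n) (Fin n) ℝ) : Matrix (Fin m2) (Fin n) ℝ :=
  g.B2ᵀ * Z + ∑ l, (g.D2 l)ᵀ * Z * g.CK P l

/-- `N(P,Z) = [N_1(P,Z); N_2(P,Z)]`. -/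
def NP (P Z : Matrix (Fin n) (Fin n) ℝ) : Matrix (Fin m1 ⊕ Fin m2) (Fin n) ℝ :=
  fromRows (g.N1 P Z) (g.N2 P Z)

/-- Membership in `Dom G`: `R_22(P) ≻ 0` and `R_11(P) ≺ 0`. -/
def MemDomG (P : Matrix (Fin n) (Fin n) ℝ) : Prop :=
  (g.R22P P).PosDef ∧ (-(g.R11P P)).PosDef

/-- `Z` satisfies the inner Riccati equation at `P`. -/
def InnerRiccati (P Z : Matrix (Fin n) (Fin n) ℝ) : Prop :=
  g.GP P + Z * g.AK P + (g.AK P)ᵀ * Z + ∑ l, (g.CK P l)ᵀ * Z * g.CK P l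
    - (g.N2 P Z)ᵀ * (g.R22P (P + Z))⁻¹ * g.N2 P Z = 0

/-- `A_L = A + B_1 K_1(0) + B_2 K_2(0) + B_2 L`. -/
def AL (L : Matrix (Fin m2) (Fin n) ℝ) : Matrix (Fin n) (Fin n) ℝ :=
  g.A + g.B1 * g.K1 0 + g.B2 * g.K2 0 + g.B2 * L

/-- `C_{lL} = C_l + D_{l,1} K_1(0) + D_{l,2} K_2(0) + D_{l,2} L`. -/
def CL (L : Matrix (Fin m2) (Fin n) ℝ) (l : Fin r) : Matrix (Fin n) (Fin n) ℝ :=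
  g.C l + g.D1 l * g.K1 0 + g.D2 l * g.K2 0 + g.D2 l * L

/-- `Q_L = Q − S(0)ᵀ R(0)⁻¹ S(0) + Lᵀ R_22 L`. -/
def QL (L : Matrix (Fin m2) (Fin n) ℝ) : Matrix (Fin n) (Fin n) ℝ :=
  g.Q - (g.SP 0)ᵀ * (g.RP 0)⁻¹ * g.SP 0 + Lᵀ * g.R22 * L

/-- `S_L = R_12 L`. -/
def SL (L : Matrix (Fin m2) (Fin n) ℝ) : Matrix (Fin m1) (Fin n) ℝ := g.R12 * L

/-- The linear term `B_1ᵀ P + Σ_l D_{l,1}ᵀ P C_{lL} + S_L` in the `L`-Riccati equation. -/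
def S1L (L : Matrix (Fin m2) (Fin n) ℝ) (P : Matrix (Fin n) (Fin n) ℝ) :
    Matrix (Fin m1) (Fin n) ℝ :=
  g.B1ᵀ * P + ∑ l, (g.D1 l)ᵀ * P * g.CL L l + g.SL L

/-- Left-hand side of the algebraic Riccati equation associated with `L`. -/
def AREL (L : Matrix (Fin m2) (Fin n) ℝ) (P : Matrix (Fin n) (Fin n) ℝ) :
    Matrix (Fin n) (Fin n) ℝ :=
  P * g.AL L + (g.AL L)ᵀ * P + ∑ l, (g.CL L l)ᵀ * P * g.CL L l + g.QL L
    - (g.S1L L P)ᵀ * (g.R11P P)⁻¹ * g.S1L L P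

/-- `K_L(P) = −(R_11 + Σ_l D_{l,1}ᵀ P D_{l,1})⁻¹ (B_1ᵀ P + Σ_l D_{l,1}ᵀ P C_{lL} + S_L)`. -/
def KL (L : Matrix (Fin m2) (Fin n) ℝ) (P : Matrix (Fin n) (Fin n) ℝ) :
    Matrix (Fin m1) (Fin n) ℝ :=
  -((g.R11P P)⁻¹ * g.S1L L P)

/-- `P̃` is a stabilizing solution of the `L`-Riccati equation. -/
def IsStabSolL (L : Matrix (Fin m2) (Fin n) ℝ) (P : Matrix (Fin n) (Fin n) ℝ) : Prop :=
  P.IsSymm ∧ g.AREL L P = 0 ∧ (-(g.R11P P)).PosDef ∧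
    MSStable (g.AL L + g.B1 * g.KL L P) (fun l => g.CL L l + g.D1 l * g.KL L P)

/-- `L ∈ 𝒜`. -/
def MemA (L : Matrix (Fin m2) (Fin n) ℝ) : Prop :=
  MSStable (g.AL L) (g.CL L) ∧ ∃ P, g.IsStabSolL L P

end GameData

namespace Matrix

variable {α ι m₁ m₂ n₁ n₂ p : Type*}

section AddCommMonoid

variable [AddCommMonoid α]

lemma fromRows_add (A₁ B₁ : Matrix m₁ p α) (A₂ B₂ : Matrix m₂ p α) :
    fromRows A₁ A₂ + fromRows B₁ B₂ = fromRows (A₁ + B₁) (A₂ + B₂) := by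
  ext (i | i) j <;> rfl

lemma fromRows_sum (s : Finset ι) (A₁ : ι → Matrix m₁ p α) (A₂ : ι → Matrix m₂ p α) :
    fromRows (∑ i ∈ s, A₁ i) (∑ i ∈ s, A₂ i) = ∑ i ∈ s, fromRows (A₁ i) (A₂ i) := by
  ext (i | i) j <;> simp [Matrix.sum_apply]

lemma fromBlocks_sum (s : Finset ι) (A₁₁ : ι → Matrix m₁ n₁ α) (A₁₂ : ι → Matrix m₁ n₂ α)
    (A₂₁ : ι → Matrix m₂ n₁ α) (A₂₂ : ι → Matrix m₂ n₂ α) :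
    fromBlocks (∑ i ∈ s, A₁₁ i) (∑ i ∈ s, A₁₂ i) (∑ i ∈ s, A₂₁ i) (∑ i ∈ s, A₂₂ i) =
      ∑ i ∈ s, fromBlocks (A₁₁ i) (A₁₂ i) (A₂₁ i) (A₂₂ i) := by
  ext (i | i) (j | j) <;> simp [Matrix.sum_apply]

end AddCommMonoid

variable [Semiring α] [Fintype p]

lemma transpose_fromCols_mul_add_sum (s : Finset ι) (X₁ : Matrix p m₁ α) (X₂ : Matrix p m₂ α)
    (Y₁ : ι → Matrix p m₁ α) (Y₂ : ι → Matrix p m₂ α) (M : Matrix p p α)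
    (W : ι → Matrix p p α) :
    (fromCols X₁ X₂)ᵀ * M + ∑ l ∈ s, (fromCols (Y₁ l) (Y₂ l))ᵀ * M * W l =
      fromRows (X₁ᵀ * M + ∑ l ∈ s, (Y₁ l)ᵀ * M * W l)
        (X₂ᵀ * M + ∑ l ∈ s, (Y₂ l)ᵀ * M * W l) := by
  simp only [transpose_fromCols, fromRows_mul, ← fromRows_add, fromRows_sum]

lemma sum_transpose_fromCols_mul_mul_fromCols [Fintype m₁] [Fintype m₂] (s : Finset ι)
    (Y₁ : ι → Matrix p m₁ α) (Y₂ : ι → Matrix p m₂ α) (M : Matrix p p α) :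
    ∑ l ∈ s, (fromCols (Y₁ l) (Y₂ l))ᵀ * M * fromCols (Y₁ l) (Y₂ l) =
      fromBlocks (∑ l ∈ s, (Y₁ l)ᵀ * M * Y₁ l) (∑ l ∈ s, (Y₁ l)ᵀ * M * Y₂ l)
        (∑ l ∈ s, (Y₂ l)ᵀ * M * Y₁ l) (∑ l ∈ s, (Y₂ l)ᵀ * M * Y₂ l) := by
  simp only [transpose_fromCols, fromRows_mul, mul_fromCols, fromCols_fromRows_eq_fromBlocks,
    fromBlocks_sum]

end Matrix

namespace GameData

variable {n m1 m2 r : ℕ} (g : GameData n m1 m2 r)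

def B : Matrix (Fin n) (Fin m1 ⊕ Fin m2) ℝ := fromCols g.B1 g.B2

def D (l : Fin r) : Matrix (Fin n) (Fin m1 ⊕ Fin m2) ℝ := fromCols (g.D1 l) (g.D2 l)

lemma SP_eq (P : Matrix (Fin n) (Fin n) ℝ) :
    g.SP P = g.Bᵀ * P + ∑ l, (g.D l)ᵀ * P * g.C l + g.Sw := by
  unfold B D
  rw [transpose_fromCols_mul_add_sum, Sw, fromRows_add]
  rfl

lemma RP_eq (P : Matrix (Fin n) (Fin n) ℝ) :
    g.RP P = g.Rw + ∑ l, (g.D l)ᵀ * P * g.D l := by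
  unfold D
  rw [sum_transpose_fromCols_mul_mul_fromCols, Rw, fromBlocks_add]
  rfl

lemma KP_eq_fromRows (P : Matrix (Fin n) (Fin n) ℝ) : g.KP P = fromRows (g.K1 P) (g.K2 P) :=
  (fromRows_toRows (g.KP P)).symm

lemma AK_eq (P : Matrix (Fin n) (Fin n) ℝ) : g.AK P = g.A + g.B * g.KP P := by
  rw [B, KP_eq_fromRows, fromCols_mul_fromRows, AK, add_assoc]

lemma CK_eq (P : Matrix (Fin n) (Fin n) ℝ) (l : Fin r) :
    g.CK P l = g.C l + g.D l * g.KP P := by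
  rw [D, KP_eq_fromRows, fromCols_mul_fromRows, CK, add_assoc]

lemma NP_eq (P Z : Matrix (Fin n) (Fin n) ℝ) :
    g.NP P Z = g.Bᵀ * Z + ∑ l, (g.D l)ᵀ * Z * g.C l + (∑ l, (g.D l)ᵀ * Z * g.D l) * g.KP P := by
  have h : g.NP P Z = g.Bᵀ * Z + ∑ l, (g.D l)ᵀ * Z * g.CK P l := by
    unfold B D
    rw [transpose_fromCols_mul_add_sum]
    rfl
  simp only [h, CK_eq, Matrix.mul_add, Finset.sum_add_distrib, Matrix.sum_mul, Matrix.mul_assoc,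
    add_assoc]

lemma SP_add (P Z : Matrix (Fin n) (Fin n) ℝ) :
    g.SP (P + Z) = g.SP P + (g.Bᵀ * Z + ∑ l, (g.D l)ᵀ * Z * g.C l) := by
  simp only [SP_eq, Matrix.mul_add, Matrix.add_mul, Finset.sum_add_distrib]
  abel

lemma RP_add (P Z : Matrix (Fin n) (Fin n) ℝ) :
    g.RP (P + Z) = g.RP P + ∑ l, (g.D l)ᵀ * Z * g.D l := by
  simp only [RP_eq, Matrix.mul_add, Matrix.add_mul, Finset.sum_add_distrib, add_assoc]

lemma RP_mul_KP {P : Matrix (Fin n) (Fin n) ℝ} (hP : IsUnit (g.RP P).det) :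
    g.RP P * g.KP P = -g.SP P := by
  rw [KP, Matrix.mul_neg, mul_nonsing_inv_cancel_left _ _ hP]

lemma SP_add_eq_NP_sub {P : Matrix (Fin n) (Fin n) ℝ} (hP : IsUnit (g.RP P).det)
    (Z : Matrix (Fin n) (Fin n) ℝ) :
    g.SP (P + Z) = g.NP P Z - g.RP (P + Z) * g.KP P := by
  rw [SP_add, RP_add, NP_eq, Matrix.add_mul, RP_mul_KP g hP]
  abel

lemma KP_add {P Z : Matrix (Fin n) (Fin n) ℝ} (hP : IsUnit (g.RP P).det)
    (hPZ : IsUnit (g.RP (P + Z)).det) :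
    g.KP (P + Z) = g.KP P - (g.RP (P + Z))⁻¹ * g.NP P Z := by
  rw [KP, SP_add_eq_NP_sub g hP, Matrix.mul_sub, nonsing_inv_mul_cancel_left _ _ hPZ]
  abel

lemma AK_add {P Z : Matrix (Fin n) (Fin n) ℝ} (hP : IsUnit (g.RP P).det)
    (hPZ : IsUnit (g.RP (P + Z)).det) :
    g.AK (P + Z) = g.AK P - g.B * (g.RP (P + Z))⁻¹ * g.NP P Z := by
  rw [AK_eq, AK_eq, KP_add g hP hPZ, Matrix.mul_sub, Matrix.mul_assoc, add_sub_assoc]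

lemma CK_add {P Z : Matrix (Fin n) (Fin n) ℝ} (hP : IsUnit (g.RP P).det)
    (hPZ : IsUnit (g.RP (P + Z)).det) (l : Fin r) :
    g.CK (P + Z) l = g.CK P l - g.D l * (g.RP (P + Z))⁻¹ * g.NP P Z := by
  rw [CK_eq, CK_eq, KP_add g hP hPZ, Matrix.mul_sub, Matrix.mul_assoc, add_sub_assoc]

end GameData

theorem statement14_general {n m1 m2 r : ℕ} (g : GameData n m1 m2 r)
    (Pseq Zseq : ℕ → Matrix (Fin n) (Fin n) ℝ)
    (hP0 : Pseq 0 = 0) (hPrec : ∀ k, Pseq (k + 1) = Pseq k + Zseq k)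
    (hRinv : ∀ k, IsUnit (g.RP (Pseq k)).det)
    (Aseq : ℕ → Matrix (Fin n) (Fin n) ℝ)
    (Cseq : ℕ → Fin r → Matrix (Fin n) (Fin n) ℝ)
    (hA0 : Aseq 0 = g.A + g.B1 * g.K1 0 + g.B2 * g.K2 0)
    (hC0 : ∀ l, Cseq 0 l = g.C l + g.D1 l * g.K1 0 + g.D2 l * g.K2 0)
    (hArec : ∀ k, Aseq (k + 1) = Aseq k
      - fromCols g.B1 g.B2 * (g.RP (Pseq (k + 1)))⁻¹
        * fromRows (g.B1ᵀ * Zseq k + ∑ l, (g.D1 l)ᵀ * Zseq k * Cseq k l)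
                   (g.B2ᵀ * Zseq k + ∑ l, (g.D2 l)ᵀ * Zseq k * Cseq k l))
    (hCrec : ∀ k, ∀ l', Cseq (k + 1) l' = Cseq k l'
      - fromCols (g.D1 l') (g.D2 l') * (g.RP (Pseq (k + 1)))⁻¹
        * fromRows (g.B1ᵀ * Zseq k + ∑ l, (g.D1 l)ᵀ * Zseq k * Cseq k l)
                   (g.B2ᵀ * Zseq k + ∑ l, (g.D2 l)ᵀ * Zseq k * Cseq k l)) :
    ∀ k, Aseq k = g.A + g.B1 * g.K1 (Pseq k) + g.B2 * g.K2 (Pseq k) ∧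
      ∀ l, Cseq k l = g.C l + g.D1 l * g.K1 (Pseq k) + g.D2 l * g.K2 (Pseq k) := by
  suffices h : ∀ k, Aseq k = g.AK (Pseq k) ∧ Cseq k = g.CK (Pseq k) from
    fun k => ⟨(h k).1, fun l => congrFun (h k).2 l⟩
  intro k
  induction k with
  | zero => exact hP0 ▸ ⟨hA0, funext hC0⟩
  | succ k ih =>
    obtain ⟨hA, hC⟩ := ih
    have hPZ : IsUnit (g.RP (Pseq k + Zseq k)).det := hPrec k ▸ hRinv (k + 1)
    refine ⟨?_, funext fun l => ?_⟩
    · rw [hArec, hA, hC, hPrec, g.AK_add (hRinv k) hPZ]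
      rfl
    · rw [hCrec, hC, hPrec, g.CK_add (hRinv k) hPZ]
      rfl

/-- the recursively updated coefficient matrices `A_{(k)}`, `C_{l,(k)}`
coincide with the closed-loop matrices `A + B_1 K_1(P^(k)) + B_2 K_2(P^(k))` and
`C_l + D_{l,1} K_1(P^(k)) + D_{l,2} K_2(P^(k))`. -/
theorem statement14 {n m1 m2 r : ℕ} (g : GameData n m1 m2 r)
    (Pseq Zseq : ℕ → Matrix (Fin n) (Fin n) ℝ)
    (hPsymm : ∀ k, (Pseq k).IsSymm) (hZsymm : ∀ k, (Zseq k).IsSymm)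
    (hP0 : Pseq 0 = 0) (hPrec : ∀ k, Pseq (k + 1) = Pseq k + Zseq k)
    (hRinv : ∀ k, IsUnit (g.RP (Pseq k)).det)
    (Aseq : ℕ → Matrix (Fin n) (Fin n) ℝ)
    (Cseq : ℕ → Fin r → Matrix (Fin n) (Fin n) ℝ)
    (hA0 : Aseq 0 = g.A + g.B1 * g.K1 0 + g.B2 * g.K2 0)
    (hC0 : ∀ l, Cseq 0 l = g.C l + g.D1 l * g.K1 0 + g.D2 l * g.K2 0)
    (hArec : ∀ k, Aseq (k + 1) = Aseq k
      - fromCols g.B1 g.B2 * (g.RP (Pseq (k + 1)))⁻¹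
        * fromRows (g.B1ᵀ * Zseq k + ∑ l, (g.D1 l)ᵀ * Zseq k * Cseq k l)
                   (g.B2ᵀ * Zseq k + ∑ l, (g.D2 l)ᵀ * Zseq k * Cseq k l))
    (hCrec : ∀ k, ∀ l', Cseq (k + 1) l' = Cseq k l'
      - fromCols (g.D1 l') (g.D2 l') * (g.RP (Pseq (k + 1)))⁻¹
        * fromRows (g.B1ᵀ * Zseq k + ∑ l, (g.D1 l)ᵀ * Zseq k * Cseq k l)
                   (g.B2ᵀ * Zseq k + ∑ l, (g.D2 l)ᵀ * Zseq k * Cseq k l)) :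
    ∀ k, Aseq k = g.A + g.B1 * g.K1 (Pseq k) + g.B2 * g.K2 (Pseq k) ∧
      ∀ l, Cseq k l = g.C l + g.D1 l * g.K1 (Pseq k) + g.D2 l * g.K2 (Pseq k) :=
  statement14_general g Pseq Zseq hP0 hPrec hRinv Aseq Cseq hA0 hC0 hArec hCrec
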